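/- The generalized Young inequality ‖f ∗ g‖_{L^{p,s}} ≤ C ‖f‖_{L^{q,l}} ‖g‖_{L^r} with 1/p + 1 = 1/q + 1/r can fail when l > s: specifically, if for some 0 < s < l ≤ ∞ and 1 < q < ∞ the inequality ‖f ∗ g‖_{L^{q,s}(ℝⁿ)} ≤ C ‖f‖_{L^{q,l}(ℝⁿ)} ‖g‖_{L^1(ℝⁿ)} held for all f ∈ L^{q,l} and all g ∈ L^1, then by testing against approximate identities one would obtain ‖f‖_{L^{q,s}(ℝⁿ)} ≤ C ‖f‖_{L^{q,l}(ℝⁿ)} for all f ∈ L^{q,l}(ℝⁿ), contradicting the strict inclusion L^{q,s}(ℝⁿ) ⊊ L^{q,l}(ℝⁿ). -/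

import Mathlib

open MeasureTheory ENNReal Set
open scoped FourierTransform NNReal

variable {α : Type*} [MeasurableSpace α]

/-- Distribution function of an `ℝ≥0∞`-valued function. -/
noncomputable def distFn (μ : Measure α) (f : α → ℝ≥0∞) (t : ℝ≥0∞) : ℝ≥0∞ :=
  μ {x | t < f x}

/-- Decreasing rearrangement. -/
noncomputable def rearr (μ : Measure α) (f : α → ℝ≥0∞) (s : ℝ≥0∞) : ℝ≥0∞ :=
  sInf {t : ℝ≥0∞ | distFn μ f t ≤ s}

/-- Lorentz quasinorm `‖f‖_{L^{p,q}(μ)}` defined via the decreasing rearrangement. -/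
noncomputable def lorentzNorm (μ : Measure α) (f : α → ℝ≥0∞) (p q : ℝ≥0∞) : ℝ≥0∞ :=
  if q = ∞ then ⨆ t : ℝ≥0∞, t ^ (p⁻¹).toReal * rearr μ f t
  else (∫⁻ t in Ioi (0 : ℝ),
      (ENNReal.ofReal t ^ (p⁻¹).toReal * rearr μ f (ENNReal.ofReal t)) ^ q.toReal
        / ENNReal.ofReal t) ^ (q⁻¹).toReal

/-- Lorentz quasinorm of a vector-valued function. -/
noncomputable def eLorentzNorm {E : Type*} [NNNorm E] (μ : Measure α) (f : α → E)
    (p q : ℝ≥0∞) : ℝ≥0∞ :=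
  lorentzNorm μ (fun x => (‖f x‖₊ : ℝ≥0∞)) p q

/-- Centered Hardy–Littlewood maximal function. -/
noncomputable def maximalFn {E : Type*} [NNNorm E] {n : ℕ}
    (f : EuclideanSpace ℝ (Fin n) → E) (x : EuclideanSpace ℝ (Fin n)) : ℝ≥0∞ :=
  ⨆ r : ℝ, ⨆ _ : 0 < r,
    (volume (Metric.ball (0 : EuclideanSpace ℝ (Fin n)) r))⁻¹ *
      ∫⁻ y in Metric.ball (0 : EuclideanSpace ℝ (Fin n)) r, (‖f (x - y)‖₊ : ℝ≥0∞)

/-- Convolution. -/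
noncomputable def convFn {n : ℕ} (f g : EuclideanSpace ℝ (Fin n) → ℂ)
    (x : EuclideanSpace ℝ (Fin n)) : ℂ :=
  ∫ y, f (x - y) * g y

/-!
Test the inequality with `g` the indicator of a small cube and `f(x) = ψ(x i₀)` on the half-slab
`x i₀ ≥ 0`, `x i ∈ [0, 1]` (`i ≠ i₀`), where `ψ(u) ≈ u^{-1/q} (log u)^{-1/s}` is constant on each
block `[e^k, e^{k+1})`. Then `f^*(t) ≤ ψ(t)`, so `‖f‖_{L^{q,l}}^l ≲ ∑ k^{-l/s} < ∞` as `l > s`.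
On a thinner half-slab `f ∗ g` is at least a multiple of `ψ(x i₀ + 1/2)`, so `(f ∗ g)^*(t) ≳ ψ(c t)`
for large `t` and `‖f ∗ g‖_{L^{q,s}}^s ≳ ∑ 1/k = ∞`, while the right-hand side is finite.
-/

theorem rearr_le_of_distFn_le {μ : Measure α} {f : α → ℝ≥0∞} {a t : ℝ≥0∞}
    (h : distFn μ f a ≤ t) : rearr μ f t ≤ a :=
  sInf_le h

theorem le_rearr_of_forall_mem_le {μ : Measure α} {f : α → ℝ≥0∞} {a t : ℝ≥0∞} {S : Set α}
    (hS : t < μ S) (hf : ∀ x ∈ S, a ≤ f x) : a ≤ rearr μ f t :=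
  le_sInf fun _ hb => le_of_not_gt fun hba =>
    (hS.trans_le (measure_mono fun x hx => hba.trans_le (hf x hx))).not_ge hb

theorem rearr_top (μ : Measure α) (f : α → ℝ≥0∞) : rearr μ f ⊤ = 0 :=
  le_antisymm (rearr_le_of_distFn_le le_top) bot_le

noncomputable def decaySeq (β σ : ℝ) (m : ℕ) : ℝ :=
  Real.exp (-((m + 1) * β)) * ((m : ℝ) + 1) ^ (-σ)

/-- A step function with `logProfile β σ u ≈ u ^ (-β) * (log u) ^ (-σ)` for large `u`: it lies in
`L^{1/β, l}` exactly when `σ l > 1`. -/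
noncomputable def logProfile (β σ : ℝ) (u : ℝ) : ℝ :=
  decaySeq β σ ⌊Real.log u⌋₊

section Profile

variable {β σ : ℝ}

theorem decaySeq_pos (β σ : ℝ) (m : ℕ) : 0 < decaySeq β σ m := by
  unfold decaySeq; positivity

theorem decaySeq_antitone (hβ : 0 ≤ β) (hσ : 0 ≤ σ) : Antitone (decaySeq β σ) := by
  intro j k hjk
  have hjk' : (j : ℝ) + 1 ≤ k + 1 := by exact_mod_cast Nat.succ_le_succ hjk
  unfold decaySeq
  refine mul_le_mul (Real.exp_le_exp.mpr (by nlinarith))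
    (Real.rpow_le_rpow_of_nonpos (by positivity) hjk' (neg_nonpos.mpr hσ)) (by positivity)
    (Real.exp_pos _).le

theorem decaySeq_le_one (hβ : 0 ≤ β) (hσ : 0 ≤ σ) (m : ℕ) : decaySeq β σ m ≤ 1 := by
  refine (decaySeq_antitone hβ hσ m.zero_le).trans ?_
  simp only [decaySeq, CharP.cast_eq_zero, zero_add, one_mul, Real.one_rpow, mul_one,
    Real.exp_le_one_iff, neg_nonpos]
  exact hβ

theorem exp_mul_decaySeq (β σ : ℝ) (m : ℕ) :
    Real.exp ((m + 1) * β) * decaySeq β σ m = ((m : ℝ) + 1) ^ (-σ) := by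
  rw [decaySeq, ← mul_assoc, ← Real.exp_add, add_neg_cancel, Real.exp_zero, one_mul]

theorem floor_log_monotoneOn : MonotoneOn (fun u : ℝ => ⌊Real.log u⌋₊) (Ici 0) := by
  intro u hu v _ huv
  rcases (mem_Ici.mp hu).eq_or_lt with rfl | hu
  · simp
  · exact Nat.floor_le_floor (Real.log_le_log hu huv)

theorem floor_log_eq_of_mem_Ico_exp {t : ℝ} {k : ℕ} (ht : t ∈ Ico (Real.exp k) (Real.exp (k + 1))) :
    ⌊Real.log t⌋₊ = k := by
  have ht0 : 0 < t := (Real.exp_pos _).trans_le ht.1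
  rw [Nat.floor_eq_iff ((Nat.cast_nonneg k).trans ((Real.le_log_iff_exp_le ht0).mpr ht.1))]
  exact ⟨(Real.le_log_iff_exp_le ht0).mpr ht.1, (Real.log_lt_iff_lt_exp ht0).mpr ht.2⟩

theorem logProfile_nonneg (β σ u : ℝ) : 0 ≤ logProfile β σ u :=
  (decaySeq_pos β σ _).le

theorem logProfile_le_one (hβ : 0 ≤ β) (hσ : 0 ≤ σ) (u : ℝ) : logProfile β σ u ≤ 1 :=
  decaySeq_le_one hβ hσ _

theorem logProfile_antitoneOn (hβ : 0 ≤ β) (hσ : 0 ≤ σ) : AntitoneOn (logProfile β σ) (Ici 0) :=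
  fun _ hu _ hv huv => decaySeq_antitone hβ hσ (floor_log_monotoneOn hu hv huv)

theorem measurable_logProfile (β σ : ℝ) : Measurable (logProfile β σ) :=
  (measurable_from_nat (f := decaySeq β σ)).comp (Nat.measurable_floor.comp Real.measurable_log)

theorem rpow_mul_logProfile_le (hβ : 0 ≤ β) {t : ℝ} (ht : 0 ≤ t) :
    t ^ β * logProfile β σ t ≤ ((⌊Real.log t⌋₊ : ℝ) + 1) ^ (-σ) := by
  set m := ⌊Real.log t⌋₊
  have ht_lt : t < Real.exp (m + 1) := by
    rcases ht.eq_or_lt with rfl | ht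
    · exact Real.exp_pos _
    · exact (Real.log_lt_iff_lt_exp ht).mp (Nat.lt_floor_add_one _)
  have hpow : t ^ β ≤ Real.exp ((m + 1) * β) := by
    rw [Real.exp_mul]
    exact Real.rpow_le_rpow ht ht_lt.le hβ
  rw [← exp_mul_decaySeq β σ m]
  exact mul_le_mul_of_nonneg_right hpow (decaySeq_pos β σ m).le

theorem le_rpow_mul_logProfile (hβ : 0 ≤ β) {t : ℝ} (ht : 1 ≤ t) :
    Real.exp (-β) * ((⌊Real.log t⌋₊ : ℝ) + 1) ^ (-σ) ≤ t ^ β * logProfile β σ t := by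
  set m := ⌊Real.log t⌋₊
  have hle : Real.exp m ≤ t :=
    (Real.le_log_iff_exp_le (by linarith)).mp (Nat.floor_le (Real.log_nonneg ht))
  have hpow : Real.exp (m * β) ≤ t ^ β := by
    rw [Real.exp_mul]
    exact Real.rpow_le_rpow (Real.exp_pos _).le hle hβ
  calc Real.exp (-β) * ((m : ℝ) + 1) ^ (-σ)
      = Real.exp (m * β) * decaySeq β σ m := by
        rw [decaySeq, ← mul_assoc, ← Real.exp_add]
        ring_nf
    _ ≤ t ^ β * logProfile β σ t :=
        mul_le_mul_of_nonneg_right hpow (logProfile_nonneg β σ t)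

end Profile

theorem Ici_eq_iUnion_Ico_exp {a : ℝ} (ha : 0 < a) :
    Ici a = ⋃ k : ℕ, Ico (a * Real.exp k) (a * Real.exp (k + 1)) := by
  ext t
  simp only [mem_Ici, mem_iUnion, mem_Ico]
  constructor
  · intro hat
    have hlog : 0 ≤ Real.log (t / a) := Real.log_nonneg ((one_le_div ha).mpr hat)
    have hta : 0 < t / a := div_pos (ha.trans_le hat) ha
    refine ⟨⌊Real.log (t / a)⌋₊, ?_, ?_⟩
    · rw [← le_div_iff₀' ha, ← Real.le_log_iff_exp_le hta]
      exact Nat.floor_le hlog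
    · rw [← div_lt_iff₀' ha, ← Real.log_lt_iff_lt_exp hta]
      exact Nat.lt_floor_add_one _
  · rintro ⟨k, hk, _⟩
    exact (le_mul_of_one_le_right ha.le (Real.one_le_exp (Nat.cast_nonneg k))).trans hk

theorem pairwise_disjoint_Ico_exp {a : ℝ} (ha : 0 < a) :
    Pairwise (Function.onFun Disjoint fun k : ℕ =>
      Ico (a * Real.exp k) (a * Real.exp (k + 1))) := by
  have hmono : Monotone fun k : ℕ => a * Real.exp k := fun j k hjk =>
    mul_le_mul_of_nonneg_left (Real.exp_le_exp.mpr (Nat.cast_le.mpr hjk)) ha.le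
  simpa using hmono.pairwise_disjoint_on_Ico_succ

theorem lintegral_Ici_eq_tsum_Ico_exp {a : ℝ} (ha : 0 < a) (F : ℝ → ℝ≥0∞) :
    ∫⁻ t in Ici a, F t = ∑' k : ℕ, ∫⁻ t in Ico (a * Real.exp k) (a * Real.exp (k + 1)), F t := by
  rw [Ici_eq_iUnion_Ico_exp ha]
  exact lintegral_iUnion (fun _ => measurableSet_Ico) (pairwise_disjoint_Ico_exp ha) F

theorem setLIntegral_Ico_exp_div (c : ℝ≥0∞) {a : ℝ} (ha : 0 < a) (x : ℝ) :
    ∫⁻ t in Ico (a * Real.exp x) (a * Real.exp (x + 1)), c / ENNReal.ofReal t = c := by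
  set I := Ico (a * Real.exp x) (a * Real.exp (x + 1))
  have hpos : ∀ t ∈ Icc (a * Real.exp x) (a * Real.exp (x + 1)), 0 < t := fun t ht =>
    (by positivity : 0 < a * Real.exp x).trans_le ht.1
  have hinv : ∫⁻ t in I, (ENNReal.ofReal t)⁻¹ = 1 := by
    rw [setLIntegral_congr_fun measurableSet_Ico fun t ht =>
      (ENNReal.ofReal_inv_of_pos (hpos t (Ico_subset_Icc_self ht))).symm]
    rw [← ofReal_integral_eq_lintegral_ofReal, integral_Ico_eq_integral_Ioo,
      ← integral_Ioc_eq_integral_Ioo, ← intervalIntegral.integral_of_le,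
      integral_inv_of_pos (by positivity) (by positivity), Real.exp_add,
      mul_div_mul_left _ _ (ne_of_gt ha), mul_div_cancel_left₀ _ (Real.exp_pos x).ne',
      Real.log_exp, ENNReal.ofReal_one]
    · gcongr; simp
    · exact (continuousOn_inv₀.mono fun t ht => (hpos t ht).ne').integrableOn_Icc.mono_set
        Ico_subset_Icc_self
    · exact (ae_restrict_mem measurableSet_Ico).mono fun t ht =>
        (inv_pos.mpr (hpos t (Ico_subset_Icc_self ht))).le
  simp_rw [div_eq_mul_inv]
  rw [lintegral_const_mul _ (by fun_prop), hinv, mul_one]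

theorem summable_nat_add_one_rpow_neg {p : ℝ} (hp : 1 < p) :
    Summable fun k : ℕ => ((k : ℝ) + 1) ^ (-p) :=
  ((Real.summable_one_div_nat_add_rpow 1 p).mpr hp).congr fun k => by
    rw [abs_of_pos (by positivity), one_div, Real.rpow_neg (by positivity)]

theorem tsum_ofReal_nat_add_two_inv_eq_top : ∑' k : ℕ, ENNReal.ofReal ((k : ℝ) + 2)⁻¹ = ⊤ := by
  by_contra h
  refine (Real.summable_one_div_nat_add_rpow 2 1).not.mpr (lt_irrefl 1) ?_
  refine (ENNReal.summable_toReal h).congr fun k => ?_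
  rw [ENNReal.toReal_ofReal (by positivity), Real.rpow_one, abs_of_pos (by positivity), one_div]

theorem ofReal_rpow_mul_ofReal_rpow {t u β r : ℝ} (ht : 0 ≤ t) (hu : 0 ≤ u) (hβ : 0 ≤ β)
    (hr : 0 ≤ r) :
    (ENNReal.ofReal t ^ β * ENNReal.ofReal u) ^ r = ENNReal.ofReal ((t ^ β * u) ^ r) := by
  rw [ENNReal.ofReal_rpow_of_nonneg ht hβ, ← ENNReal.ofReal_mul (by positivity),
    ENNReal.ofReal_rpow_of_nonneg (by positivity) hr]

/-- The integral `∫₀^∞ (t^β ρ(t))^r dt/t` defining `lorentzNorm` for a finite second index. -/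
noncomputable def lorentzIntegral (β r : ℝ) (ρ : ℝ → ℝ≥0∞) : ℝ≥0∞ :=
  ∫⁻ t in Ioi 0, (ENNReal.ofReal t ^ β * ρ t) ^ r / ENNReal.ofReal t

theorem lorentzNorm_eq_lorentzIntegral_rpow (μ : Measure α) (f : α → ℝ≥0∞) (p : ℝ≥0∞) {q : ℝ≥0∞}
    (hq : q ≠ ⊤) :
    lorentzNorm μ f p q =
      lorentzIntegral (p⁻¹).toReal q.toReal (fun t => rearr μ f (ENNReal.ofReal t)) ^
        (q⁻¹).toReal := by
  rw [lorentzNorm, if_neg hq, lorentzIntegral]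

section LorentzIntegral

variable {β σ r : ℝ} {ρ ρ' : ℝ → ℝ≥0∞}

theorem lorentzIntegral_mono (hr : 0 ≤ r) (h : ∀ t > 0, ρ t ≤ ρ' t) :
    lorentzIntegral β r ρ ≤ lorentzIntegral β r ρ' :=
  setLIntegral_mono' measurableSet_Ioi fun t ht => by gcongr; exact h t ht

theorem setLIntegral_Ici_le_lorentzIntegral {a : ℝ} (ha : 0 < a) :
    ∫⁻ t in Ici a, (ENNReal.ofReal t ^ β * ρ t) ^ r / ENNReal.ofReal t ≤ lorentzIntegral β r ρ :=
  lintegral_mono_set fun _ ht => ha.trans_le ht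

theorem setLIntegral_Ioo_logProfile_lt_top (hβ : 0 < β) (hσ : 0 ≤ σ) (hr : 0 < r) :
    ∫⁻ t in Ioo 0 1,
      (ENNReal.ofReal t ^ β * ENNReal.ofReal (logProfile β σ t)) ^ r / ENNReal.ofReal t < ⊤ := by
  have hle : ∀ t ∈ Ioo (0 : ℝ) 1,
      (ENNReal.ofReal t ^ β * ENNReal.ofReal (logProfile β σ t)) ^ r / ENNReal.ofReal t ≤
        ENNReal.ofReal (t ^ (β * r - 1)) := fun t ht => by
    rw [ofReal_rpow_mul_ofReal_rpow ht.1.le (logProfile_nonneg β σ t) hβ.le hr.le,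
      ← ENNReal.ofReal_div_of_pos ht.1, Real.rpow_sub ht.1, Real.rpow_one, Real.rpow_mul ht.1.le]
    have htβ : 0 ≤ t ^ β := Real.rpow_nonneg ht.1.le β
    refine ENNReal.ofReal_le_ofReal (div_le_div_of_nonneg_right ?_ ht.1.le)
    exact Real.rpow_le_rpow (mul_nonneg htβ (logProfile_nonneg β σ t))
      (mul_le_of_le_one_right htβ (logProfile_le_one hβ.le hσ t)) hr.le
  have hint : IntegrableOn (fun t : ℝ => t ^ (β * r - 1)) (Ioo 0 1) :=
    (intervalIntegral.integrableOn_Ioo_rpow_iff one_pos).mpr (by nlinarith)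
  refine (setLIntegral_mono' measurableSet_Ioo hle).trans_lt ?_
  rw [← ofReal_integral_eq_lintegral_ofReal hint
    ((ae_restrict_mem measurableSet_Ioo).mono fun t ht => Real.rpow_nonneg ht.1.le _)]
  exact ENNReal.ofReal_lt_top

theorem setLIntegral_Ico_exp_logProfile_le (hβ : 0 ≤ β) (hr : 0 ≤ r) (k : ℕ) :
    ∫⁻ t in Ico (Real.exp k) (Real.exp (k + 1)),
      (ENNReal.ofReal t ^ β * ENNReal.ofReal (logProfile β σ t)) ^ r / ENNReal.ofReal t ≤
        ENNReal.ofReal (((k : ℝ) + 1) ^ (-(σ * r))) := by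
  refine le_of_le_of_eq (setLIntegral_mono' measurableSet_Ico fun t ht => ?_)
    (by simpa using setLIntegral_Ico_exp_div _ one_pos k)
  have ht0 : 0 < t := (Real.exp_pos _).trans_le ht.1
  rw [ofReal_rpow_mul_ofReal_rpow ht0.le (logProfile_nonneg β σ t) hβ hr, ← neg_mul,
    Real.rpow_mul (by positivity)]
  have hbound := rpow_mul_logProfile_le (σ := σ) hβ ht0.le
  rw [floor_log_eq_of_mem_Ico_exp ht] at hbound
  exact ENNReal.div_le_div_right (ENNReal.ofReal_le_ofReal (Real.rpow_le_rpow
    (mul_nonneg (by positivity) (logProfile_nonneg β σ t)) hbound hr)) _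

theorem lorentzIntegral_logProfile_lt_top (hβ : 0 < β) (hr : 0 < r) (hσr : 1 < σ * r) :
    lorentzIntegral β r (fun t => ENNReal.ofReal (logProfile β σ t)) < ⊤ := by
  have hσ : 0 ≤ σ := by by_contra h; nlinarith
  have hsplit : Ioi (0 : ℝ) ⊆ Ioo 0 1 ∪ Ici 1 := fun t ht => (lt_or_ge t 1).imp (⟨ht, ·⟩) id
  refine (lintegral_mono_set hsplit).trans_lt ((lintegral_union_le _ _ _).trans_lt
    (ENNReal.add_lt_top.mpr ⟨setLIntegral_Ioo_logProfile_lt_top hβ hσ hr, ?_⟩))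
  rw [lintegral_Ici_eq_tsum_Ico_exp one_pos]
  simp only [one_mul]
  refine (ENNReal.tsum_le_tsum (setLIntegral_Ico_exp_logProfile_le hβ.le hr.le)).trans_lt ?_
  rw [← ENNReal.ofReal_tsum_of_nonneg (fun _ => by positivity)
    (summable_nat_add_one_rpow_neg hσr)]
  exact ENNReal.ofReal_lt_top

theorem le_rpow_mul_logProfile_mul {κ t : ℝ} (hβ : 0 ≤ β) (hκ : 0 < κ) (ht : 0 ≤ t) {k : ℕ}
    (hκt : κ * t ∈ Ico (Real.exp k) (Real.exp (k + 1))) :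
    κ ^ (-β) * Real.exp (-β) * ((k : ℝ) + 1) ^ (-σ) ≤ t ^ β * logProfile β σ (κ * t) := by
  have h := le_rpow_mul_logProfile (σ := σ) hβ ((Real.one_le_exp k.cast_nonneg).trans hκt.1)
  rw [floor_log_eq_of_mem_Ico_exp hκt, Real.mul_rpow hκ.le ht] at h
  calc κ ^ (-β) * Real.exp (-β) * ((k : ℝ) + 1) ^ (-σ)
      = κ ^ (-β) * (Real.exp (-β) * ((k : ℝ) + 1) ^ (-σ)) := mul_assoc _ _ _
    _ ≤ κ ^ (-β) * (κ ^ β * t ^ β * logProfile β σ (κ * t)) := by gcongr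
    _ = t ^ β * logProfile β σ (κ * t) := by rw [Real.rpow_neg hκ.le]; field_simp

theorem le_setLIntegral_Ico_exp_logProfile {κ c : ℝ} (hβ : 0 ≤ β) (hσ : 0 < σ) (hκ : 0 < κ)
    (hc : 0 < c) (k : ℕ) :
    ENNReal.ofReal ((c * κ ^ (-β) * Real.exp (-β)) ^ σ⁻¹ * ((k : ℝ) + 2)⁻¹) ≤
      ∫⁻ t in Ico (Real.exp 1 / κ * Real.exp k) (Real.exp 1 / κ * Real.exp (k + 1)),
        (ENNReal.ofReal t ^ β * ENNReal.ofReal (c * logProfile β σ (κ * t))) ^ σ⁻¹ /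
          ENNReal.ofReal t := by
  refine le_of_eq_of_le (setLIntegral_Ico_exp_div _ (by positivity) k).symm
    (setLIntegral_mono' measurableSet_Ico fun t ht => ?_)
  have ht0 : 0 < t := (by positivity : 0 < Real.exp 1 / κ * Real.exp k).trans_le ht.1
  have hκt : κ * t ∈ Ico (Real.exp ((k + 1 : ℕ) : ℝ)) (Real.exp ((k + 1 : ℕ) + 1)) := by
    have hscale : ∀ x : ℝ, κ * (Real.exp 1 / κ * Real.exp x) = Real.exp (x + 1) := fun x => by
      rw [Real.exp_add]; field_simp
    have h1 := mul_le_mul_of_nonneg_left ht.1 hκ.le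
    have h2 := mul_lt_mul_of_pos_left ht.2 hκ
    rw [hscale] at h1 h2
    push_cast
    exact ⟨h1, h2⟩
  have hlower := mul_le_mul_of_nonneg_left (le_rpow_mul_logProfile_mul (σ := σ) hβ hκ ht0.le hκt)
    hc.le
  have hpow : ((((k + 1 : ℕ) : ℝ) + 1) ^ (-σ)) ^ σ⁻¹ = ((k : ℝ) + 2)⁻¹ := by
    rw [← Real.rpow_mul (by positivity), neg_mul, mul_inv_cancel₀ hσ.ne', Real.rpow_neg_one]
    push_cast; ring
  rw [ofReal_rpow_mul_ofReal_rpow ht0.le (mul_nonneg hc.le (logProfile_nonneg β σ _)) hβ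
    (inv_nonneg.mpr hσ.le), mul_left_comm]
  gcongr
  calc (c * κ ^ (-β) * Real.exp (-β)) ^ σ⁻¹ * ((k : ℝ) + 2)⁻¹
      = (c * (κ ^ (-β) * Real.exp (-β) * (((k + 1 : ℕ) : ℝ) + 1) ^ (-σ))) ^ σ⁻¹ := by
        rw [← hpow, ← Real.mul_rpow (by positivity) (by positivity)]
        congr 1; ring
    _ ≤ (c * (t ^ β * logProfile β σ (κ * t))) ^ σ⁻¹ :=
        Real.rpow_le_rpow (by positivity) hlower (inv_nonneg.mpr hσ.le)

theorem setLIntegral_Ici_logProfile_eq_top (hβ : 0 ≤ β) (hσ : 0 < σ) {κ c : ℝ} (hκ : 0 < κ)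
    (hc : 0 < c) :
    ∫⁻ t in Ici (Real.exp 1 / κ),
      (ENNReal.ofReal t ^ β * ENNReal.ofReal (c * logProfile β σ (κ * t))) ^ σ⁻¹ /
        ENNReal.ofReal t = ⊤ := by
  set D := (c * κ ^ (-β) * Real.exp (-β)) ^ σ⁻¹
  rw [lintegral_Ici_eq_tsum_Ico_exp (by positivity), eq_top_iff]
  calc ⊤ = ENNReal.ofReal D * ∑' k : ℕ, ENNReal.ofReal ((k : ℝ) + 2)⁻¹ := by
        rw [tsum_ofReal_nat_add_two_inv_eq_top,
          ENNReal.mul_top (ENNReal.ofReal_pos.mpr (by positivity)).ne']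
    _ = ∑' k : ℕ, ENNReal.ofReal (D * ((k : ℝ) + 2)⁻¹) := by
        rw [← ENNReal.tsum_mul_left]
        congr 1 with k
        rw [ENNReal.ofReal_mul (by positivity)]
    _ ≤ _ := ENNReal.tsum_le_tsum (le_setLIntegral_Ico_exp_logProfile hβ hσ hκ hc)

end LorentzIntegral

section LorentzNorm

variable {μ : Measure α} {φ : α → ℝ≥0∞} {p : ℝ≥0∞}

theorem lorentzNorm_ne_top_of_rearr_le_logProfile {l : ℝ≥0∞} {σ : ℝ} (hp0 : p ≠ 0) (hp : p ≠ ⊤)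
    (hσ : 0 < σ) (hl : l ≠ ⊤ → 1 < σ * l.toReal)
    (hφ : ∀ t ≥ 0, rearr μ φ (ENNReal.ofReal t) ≤ ENNReal.ofReal (logProfile (p⁻¹).toReal σ t)) :
    lorentzNorm μ φ p l ≠ ⊤ := by
  have hβ : 0 < (p⁻¹).toReal := ENNReal.toReal_pos (ENNReal.inv_ne_zero.mpr hp) (by simpa)
  by_cases hlt : l = ⊤
  · rw [lorentzNorm, if_pos hlt]
    refine ne_top_of_le_ne_top ENNReal.one_ne_top (iSup_le fun t => ?_)
    rcases eq_or_ne t ⊤ with rfl | ht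
    · simp [rearr_top]
    rw [← ENNReal.ofReal_toReal ht]
    calc ENNReal.ofReal t.toReal ^ (p⁻¹).toReal * rearr μ φ (ENNReal.ofReal t.toReal)
        ≤ ENNReal.ofReal t.toReal ^ (p⁻¹).toReal *
            ENNReal.ofReal (logProfile (p⁻¹).toReal σ t.toReal) :=
          mul_le_mul_right (hφ _ toReal_nonneg) _
      _ = ENNReal.ofReal (t.toReal ^ (p⁻¹).toReal * logProfile (p⁻¹).toReal σ t.toReal) := by
        simpa using ofReal_rpow_mul_ofReal_rpow toReal_nonneg (logProfile_nonneg _ σ _) hβ.le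
          zero_le_one
      _ ≤ 1 := by
        refine ENNReal.ofReal_le_one.mpr ((rpow_mul_logProfile_le hβ.le toReal_nonneg).trans ?_)
        exact Real.rpow_le_one_of_one_le_of_nonpos (by simp) (by linarith)
  · have hl0 : 0 < l.toReal := by by_contra h; nlinarith [hl hlt]
    rw [lorentzNorm_eq_lorentzIntegral_rpow μ φ p hlt]
    refine ENNReal.rpow_ne_top_of_nonneg toReal_nonneg (ne_top_of_le_ne_top ?_
      (lorentzIntegral_mono hl0.le fun t ht => hφ t ht.le))
    exact (lorentzIntegral_logProfile_lt_top hβ hl0 (hl hlt)).ne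

theorem lorentzNorm_eq_top_of_logProfile_le_rearr {s : ℝ≥0∞} (hs0 : s ≠ 0) (hs : s ≠ ⊤) {κ c : ℝ}
    (hκ : 0 < κ) (hc : 0 < c)
    (hφ : ∀ t ≥ Real.exp 1 / κ, ENNReal.ofReal (c * logProfile (p⁻¹).toReal (s.toReal)⁻¹ (κ * t)) ≤
      rearr μ φ (ENNReal.ofReal t)) :
    lorentzNorm μ φ p s = ⊤ := by
  have hr : 0 < s.toReal := ENNReal.toReal_pos hs0 hs
  suffices h : lorentzIntegral (p⁻¹).toReal s.toReal (fun t => rearr μ φ (ENNReal.ofReal t)) = ⊤ by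
    rw [lorentzNorm_eq_lorentzIntegral_rpow μ φ p hs, h, ENNReal.toReal_inv]
    exact ENNReal.top_rpow_of_pos (inv_pos.mpr hr)
  refine eq_top_iff.mpr (le_trans ?_
    (setLIntegral_Ici_le_lorentzIntegral (a := Real.exp 1 / κ) (by positivity)))
  rw [← setLIntegral_Ici_logProfile_eq_top toReal_nonneg (inv_pos.mpr hr) hκ hc, inv_inv]
  exact setLIntegral_mono' measurableSet_Ici fun t ht =>
    ENNReal.div_le_div_right (ENNReal.rpow_le_rpow (mul_le_mul_right (hφ t ht) _) hr.le) _

end LorentzNorm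

theorem coe_nnnorm_ofReal_of_nonneg {r : ℝ} (hr : 0 ≤ r) :
    ((‖(r : ℂ)‖₊ : ℝ≥0) : ℝ≥0∞) = ENNReal.ofReal r := by
  rw [← enorm_eq_nnnorm, ← ofReal_norm, Complex.norm_real, Real.norm_of_nonneg hr]

section Slab

variable {n : ℕ}

def slab (i₀ : Fin n) (I J : Set ℝ) : Set (EuclideanSpace ℝ (Fin n)) :=
  {x | x i₀ ∈ I ∧ ∀ i ≠ i₀, x i ∈ J}

theorem slab_eq_preimage_pi (i₀ : Fin n) (I J : Set ℝ) :
    slab i₀ I J =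
      (MeasurableEquiv.toLp 2 (Fin n → ℝ)).symm ⁻¹'
        univ.pi (Function.update (fun _ => J) i₀ I) := by
  ext x
  simp only [slab, mem_preimage, mem_univ_pi]
  constructor
  · rintro ⟨h₀, h⟩ i
    rcases eq_or_ne i i₀ with rfl | hi
    · simpa using h₀
    · simpa [hi] using h i hi
  · intro h
    exact ⟨by simpa using h i₀, fun i hi => by simpa [hi] using h i⟩

theorem measurableSet_slab (i₀ : Fin n) {I J : Set ℝ} (hI : MeasurableSet I)
    (hJ : MeasurableSet J) : MeasurableSet (slab i₀ I J) := by
  rw [slab_eq_preimage_pi]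
  refine MeasurableEquiv.measurableSet_preimage _ |>.mpr (MeasurableSet.univ_pi fun i => ?_)
  rcases eq_or_ne i i₀ with rfl | hi <;> simp [*]

theorem volume_slab (i₀ : Fin n) (I J : Set ℝ) :
    volume (slab i₀ I J) = volume I * volume J ^ (n - 1) := by
  rw [slab_eq_preimage_pi, (EuclideanSpace.volume_preserving_symm_measurableEquiv_toLp
    (Fin n)).measure_preimage_equiv, volume_pi_pi,
    Finset.prod_eq_mul_prod_sdiff_singleton_of_mem (Finset.mem_univ i₀)]
  simp +contextual [Finset.prod_congr rfl, Function.update_of_ne, Finset.card_sdiff]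

end Slab

theorem convFn_ofReal_indicator_one {n : ℕ} (F : EuclideanSpace ℝ (Fin n) → ℝ)
    {K : Set (EuclideanSpace ℝ (Fin n))} (hK : MeasurableSet K) (x : EuclideanSpace ℝ (Fin n)) :
    convFn (fun y => (F y : ℂ)) (K.indicator 1) x = ((∫ y in K, F (x - y) : ℝ) : ℂ) := by
  rw [convFn, ← integral_complex_ofReal, ← integral_indicator hK]
  congr 1 with y
  by_cases hy : y ∈ K <;> simp [hy]

section TestFunctions

variable {n : ℕ} {β σ : ℝ}

noncomputable def slabProfile (β σ : ℝ) (i₀ : Fin n) : EuclideanSpace ℝ (Fin n) → ℝ :=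
  (slab i₀ (Ici 0) (Icc 0 1)).indicator fun x => logProfile β σ (x i₀)

noncomputable def cubeIndicator (i₀ : Fin n) : EuclideanSpace ℝ (Fin n) → ℂ :=
  (slab i₀ (Icc (-2⁻¹) 0) (Icc (-2⁻¹) 0)).indicator 1

theorem slabProfile_nonneg (i₀ : Fin n) (x : EuclideanSpace ℝ (Fin n)) :
    0 ≤ slabProfile β σ i₀ x :=
  indicator_nonneg (fun x _ => logProfile_nonneg β σ (x i₀)) x

theorem measurable_slabProfile (i₀ : Fin n) : Measurable (slabProfile β σ i₀) :=
  ((measurable_logProfile β σ).comp (by fun_prop)).indicator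
    (measurableSet_slab i₀ measurableSet_Ici measurableSet_Icc)

theorem memLp_cubeIndicator (i₀ : Fin n) : MemLp (cubeIndicator i₀) 1 volume := by
  refine memLp_one_iff_integrable.mpr ((integrable_indicator_iff
    (measurableSet_slab i₀ measurableSet_Icc measurableSet_Icc)).mpr (integrableOn_const ?_))
  simp [volume_slab, ENNReal.mul_eq_top]

theorem rearr_slabProfile_le (hβ : 0 ≤ β) (hσ : 0 ≤ σ) (i₀ : Fin n) {t : ℝ} (ht : 0 ≤ t) :
    rearr volume (fun x => (‖(slabProfile β σ i₀ x : ℂ)‖₊ : ℝ≥0∞)) (ENNReal.ofReal t) ≤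
      ENNReal.ofReal (logProfile β σ t) := by
  refine rearr_le_of_distFn_le ?_
  have hsub : {x | ENNReal.ofReal (logProfile β σ t) < ‖(slabProfile β σ i₀ x : ℂ)‖₊} ⊆
      slab i₀ (Ico 0 t) (Icc 0 1) := by
    intro x hx
    rw [mem_ofPred_eq, coe_nnnorm_ofReal_of_nonneg (slabProfile_nonneg i₀ x),
      ENNReal.ofReal_lt_ofReal_iff_of_nonneg (logProfile_nonneg β σ t)] at hx
    by_cases hxS : x ∈ slab i₀ (Ici 0) (Icc 0 1)
    · rw [slabProfile, indicator_of_mem hxS] at hx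
      exact ⟨⟨hxS.1, lt_of_not_ge fun htx =>
        (logProfile_antitoneOn hβ hσ (mem_Ici.mpr ht) hxS.1 htx).not_gt hx⟩, hxS.2⟩
    · rw [slabProfile, indicator_of_notMem hxS] at hx
      exact absurd hx (logProfile_nonneg β σ t).not_gt
  calc distFn volume _ (ENNReal.ofReal (logProfile β σ t))
      ≤ volume (slab i₀ (Ico 0 t) (Icc 0 1)) := measure_mono hsub
    _ = ENNReal.ofReal t := by simp [volume_slab]

theorem slabProfile_le_one (hβ : 0 ≤ β) (hσ : 0 ≤ σ) (i₀ : Fin n) (x : EuclideanSpace ℝ (Fin n)) :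
    slabProfile β σ i₀ x ≤ 1 := by
  unfold slabProfile
  by_cases hx : x ∈ slab i₀ (Ici 0) (Icc 0 1)
  · rw [indicator_of_mem hx]; exact logProfile_le_one hβ hσ _
  · rw [indicator_of_notMem hx]; exact zero_le_one

theorem logProfile_le_slabProfile_sub (hβ : 0 ≤ β) (hσ : 0 ≤ σ) (i₀ : Fin n)
    {x y : EuclideanSpace ℝ (Fin n)} (hx : x ∈ slab i₀ (Ici 0) (Icc 0 2⁻¹))
    (hy : y ∈ slab i₀ (Icc (-2⁻¹) 0) (Icc (-2⁻¹) 0)) :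
    logProfile β σ (x i₀ + 2⁻¹) ≤ slabProfile β σ i₀ (x - y) := by
  have hxy : x - y ∈ slab i₀ (Ici 0) (Icc 0 1) := by
    refine ⟨?_, fun i hi => ?_⟩
    · have := hy.1.2; simp only [PiLp.sub_apply, mem_Ici]; linarith [mem_Ici.mp hx.1]
    · have := hx.2 i hi; have := hy.2 i hi
      simp only [PiLp.sub_apply, mem_Icc] at *
      constructor <;> linarith
  rw [slabProfile, indicator_of_mem hxy]
  refine logProfile_antitoneOn hβ hσ hxy.1 ?_ ?_
  · exact mem_Ici.mpr (by linarith [mem_Ici.mp hx.1])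
  · simp only [PiLp.sub_apply]; linarith [hy.1.1]

theorem le_nnnorm_convFn_slabProfile (hβ : 0 ≤ β) (hσ : 0 ≤ σ) (i₀ : Fin n)
    {x : EuclideanSpace ℝ (Fin n)} (hx : x ∈ slab i₀ (Ici 0) (Icc 0 2⁻¹)) :
    ENNReal.ofReal (2⁻¹ ^ n * logProfile β σ (x i₀ + 2⁻¹)) ≤
      ‖convFn (fun y => (slabProfile β σ i₀ y : ℂ)) (cubeIndicator i₀) x‖₊ := by
  set K := slab i₀ (Icc (-2⁻¹ : ℝ) 0) (Icc (-2⁻¹) 0)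
  have hK : MeasurableSet K := measurableSet_slab i₀ measurableSet_Icc measurableSet_Icc
  have hKvol : volume K = ENNReal.ofReal (2⁻¹ ^ n) := by
    rw [volume_slab, Real.volume_Icc, ← pow_succ', Nat.sub_add_cancel i₀.pos,
      ENNReal.ofReal_pow (by norm_num)]
    norm_num
  have hint : IntegrableOn (fun y => slabProfile β σ i₀ (x - y)) K := by
    refine Measure.integrableOn_of_bounded (M := 1) (by simp [hKvol])
      ((measurable_slabProfile i₀).comp (by fun_prop)).aestronglyMeasurable
      (ae_of_all _ fun y => ?_)
    rw [Real.norm_of_nonneg (slabProfile_nonneg i₀ _)]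
    exact slabProfile_le_one hβ hσ i₀ _
  rw [cubeIndicator, convFn_ofReal_indicator_one _ hK, coe_nnnorm_ofReal_of_nonneg
    (setIntegral_nonneg hK fun y _ => slabProfile_nonneg i₀ _)]
  refine ENNReal.ofReal_le_ofReal (le_of_eq_of_le ?_ (setIntegral_ge_of_const_le_real hK
    (by simp [hKvol]) (fun y hy => logProfile_le_slabProfile_sub hβ hσ i₀ hx hy) hint))
  rw [measureReal_def, hKvol, ENNReal.toReal_ofReal (by positivity), mul_comm]

/-- `2⁻¹ ^ (n - 1)` is the cross-section of the half-slab `x i ∈ [0, 1/2]` (`i ≠ i₀`) on which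
`f ∗ g ≥ 2⁻ⁿ ψ(x i₀ + 1/2)`. -/
theorem logProfile_le_rearr_convFn_slabProfile (hβ : 0 ≤ β) (hσ : 0 ≤ σ) (i₀ : Fin n) {t : ℝ}
    (ht : Real.exp 1 / (2 / 2⁻¹ ^ (n - 1)) ≤ t) :
    ENNReal.ofReal (2⁻¹ ^ n * logProfile β σ (2 / 2⁻¹ ^ (n - 1) * t)) ≤
      rearr volume (fun x => ‖convFn (fun y => (slabProfile β σ i₀ y : ℂ)) (cubeIndicator i₀) x‖₊)
        (ENNReal.ofReal t) := by
  set v : ℝ := 2⁻¹ ^ (n - 1)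
  have hv : 0 < v := by positivity
  have htv : v ≤ t := by
    refine le_trans ?_ ht
    rw [div_div_eq_mul_div, le_div_iff₀ two_pos]
    nlinarith [Real.add_one_le_exp 1]
  have ht0 : 0 < t := hv.trans_le htv
  refine le_rearr_of_forall_mem_le (S := slab i₀ (Ico 0 (t / v + 2⁻¹)) (Icc 0 2⁻¹)) ?_
    fun x hx => ?_
  · rw [volume_slab, Real.volume_Ico, Real.volume_Icc, ← ENNReal.ofReal_pow (by norm_num),
      ← ENNReal.ofReal_mul (by have := div_pos ht0 hv; linarith),
      ENNReal.ofReal_lt_ofReal_iff_of_nonneg ht0.le, sub_zero, sub_zero, add_mul,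
      div_mul_cancel₀ t hv.ne']
    exact lt_add_of_pos_right t (by positivity)
  · refine le_trans ?_ (le_nnnorm_convFn_slabProfile hβ hσ i₀ ⟨mem_Ici.mpr hx.1.1, hx.2⟩)
    have hx0 : 0 ≤ x i₀ + 2⁻¹ := by linarith [hx.1.1]
    gcongr
    refine logProfile_antitoneOn hβ hσ hx0 (mem_Ici.mpr (mul_pos (div_pos two_pos hv) ht0).le) ?_
    have h1 : 1 ≤ t / v := (one_le_div hv).mpr htv
    rw [show 2 / v * t = 2 * (t / v) by ring]
    linarith [hx.1.2]

end TestFunctions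

/-- The generalized Young inequality fails when the second index on the left is smaller:
for `0 < s < l ≤ ∞` and `1 < q < ∞`, there is no finite constant `C` with
`‖f ∗ g‖_{L^{q,s}} ≤ C ‖f‖_{L^{q,l}} ‖g‖_{L^1}` for all `f ∈ L^{q,l}`, `g ∈ L^1`. -/
theorem young_lorentz_fails {n : ℕ} (hn : 0 < n) (q s l : ℝ≥0∞)
    (hs : 0 < s) (hsl : s < l) (hq1 : 1 < q) (hq2 : q < ⊤) :
    ¬ ∃ C : ℝ≥0∞, C ≠ ⊤ ∧
      ∀ f g : EuclideanSpace ℝ (Fin n) → ℂ, Measurable f →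
        eLorentzNorm volume f q l ≠ ⊤ → MemLp g 1 volume →
        eLorentzNorm volume (convFn f g) q s ≤
          C * eLorentzNorm volume f q l * eLpNorm g 1 volume := by
  rintro ⟨C, hC, hYoung⟩
  have hs_top : s ≠ ⊤ := hsl.ne_top
  have hσ : 0 < (s.toReal)⁻¹ := inv_pos.mpr (ENNReal.toReal_pos hs.ne' hs_top)
  set i₀ : Fin n := ⟨0, hn⟩
  set f : EuclideanSpace ℝ (Fin n) → ℂ := fun x => slabProfile (q⁻¹).toReal (s.toReal)⁻¹ i₀ x
  have hf : eLorentzNorm volume f q l ≠ ⊤ := by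
    refine lorentzNorm_ne_top_of_rearr_le_logProfile (zero_lt_one.trans hq1).ne' hq2.ne hσ
      (fun hl => ?_) (fun t ht => rearr_slabProfile_le toReal_nonneg hσ.le i₀ ht)
    rw [← div_eq_inv_mul, one_lt_div (inv_pos.mp hσ)]
    exact (ENNReal.toReal_lt_toReal hs_top hl).mpr hsl
  have hfg : eLorentzNorm volume (convFn f (cubeIndicator i₀)) q s = ⊤ :=
    lorentzNorm_eq_top_of_logProfile_le_rearr hs.ne' hs_top (by positivity) (by positivity)
      (fun t ht => logProfile_le_rearr_convFn_slabProfile toReal_nonneg hσ.le i₀ ht)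
  have hg := memLp_cubeIndicator i₀
  have hYoung_fg := hYoung f (cubeIndicator i₀)
    (Complex.measurable_ofReal.comp (measurable_slabProfile i₀)) hf hg
  rw [hfg, top_le_iff] at hYoung_fg
  exact mul_ne_top (mul_ne_top hC hf) hg.eLpNorm_ne_top hYoung_fg
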